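/- Under the multilevel construction above, if additionally E‖g_j - v‖² ≤ A/2^j + C/4^j for all levels j and some target vector v and constants A, C ≥ 0, then E‖g - v‖² ≤ 2E‖g₀ - v‖² + 8 ∑_{i=1}^{⌊log₂ M⌋} 2^i (A/2^{i-1} + C/4^{i-1}), which is bounded by O(A log₂ M + C). -/

import Mathlib

open MeasureTheory

/-
Write `g - v = (g₀ - v) + 2ᴶ ((g_J - v) - (g_{J-1} - v))` and use `‖a + b‖² ≤ 2‖a‖² + 2‖b‖²`
twice: a level `i` with `2ⁱ ≤ M` contributes at most
`2 E‖g₀ - v‖² + 4 · 4ⁱ (E‖gᵢ - v‖² + E‖gᵢ₋₁ - v‖²) ≤ 2 E‖g₀ - v‖² + 8 · 4ⁱ (A/2^{i-1} + C/4^{i-1})`,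
every other level contributes `E‖g₀ - v‖²`. Averaging over `J` with `P(J = i) = 2⁻ⁱ` turns the
importance weight `4ⁱ` into `2ⁱ`.
-/

section Norm

variable {E : Type*} [SeminormedAddCommGroup E]

theorem norm_add_sq_le_two_mul (u w : E) : ‖u + w‖ ^ 2 ≤ 2 * (‖u‖ ^ 2 + ‖w‖ ^ 2) :=
  (pow_le_pow_left₀ (norm_nonneg _) (norm_add_le u w) 2).trans add_sq_le

theorem norm_sub_sq_le_two_mul (u w : E) : ‖u - w‖ ^ 2 ≤ 2 * (‖u‖ ^ 2 + ‖w‖ ^ 2) := by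
  simpa [sub_eq_add_neg] using norm_add_sq_le_two_mul u (-w)

theorem norm_add_smul_sub_sub_sq_le [NormedSpace ℝ E] (a x y v : E) (c : ℝ) :
    ‖a + c • (x - y) - v‖ ^ 2 ≤ 2 * ‖a - v‖ ^ 2 + 4 * c ^ 2 * (‖x - v‖ ^ 2 + ‖y - v‖ ^ 2) := by
  have hdiff : ‖c • (x - y)‖ ^ 2 ≤ c ^ 2 * (2 * (‖x - v‖ ^ 2 + ‖y - v‖ ^ 2)) := by
    rw [norm_smul, mul_pow, Real.norm_eq_abs, sq_abs, ← sub_sub_sub_cancel_right x y v]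
    gcongr
    exact norm_sub_sq_le_two_mul _ _
  calc ‖a + c • (x - y) - v‖ ^ 2 = ‖(a - v) + c • (x - y)‖ ^ 2 := by rw [sub_add_eq_add_sub]
    _ ≤ 2 * (‖a - v‖ ^ 2 + ‖c • (x - y)‖ ^ 2) := norm_add_sq_le_two_mul _ _
    _ ≤ _ := by linarith

end Norm

section Integral

variable {Ω E : Type*} [MeasurableSpace Ω] {μ : Measure Ω} [NormedAddCommGroup E]
  [NormedSpace ℝ E]

theorem integral_norm_add_smul_sub_sub_sq_le {f₀ f₁ f₂ : Ω → E} {v : E} (c : ℝ)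
    (h₀ : Integrable (fun ω => ‖f₀ ω - v‖ ^ 2) μ) (h₁ : Integrable (fun ω => ‖f₁ ω - v‖ ^ 2) μ)
    (h₂ : Integrable (fun ω => ‖f₂ ω - v‖ ^ 2) μ) :
    ∫ ω, ‖f₀ ω + c • (f₁ ω - f₂ ω) - v‖ ^ 2 ∂μ ≤
      2 * ∫ ω, ‖f₀ ω - v‖ ^ 2 ∂μ +
        4 * c ^ 2 * (∫ ω, ‖f₁ ω - v‖ ^ 2 ∂μ + ∫ ω, ‖f₂ ω - v‖ ^ 2 ∂μ) := by
  have h₁₂ : Integrable (fun ω => ‖f₁ ω - v‖ ^ 2 + ‖f₂ ω - v‖ ^ 2) μ := h₁.add h₂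
  calc ∫ ω, ‖f₀ ω + c • (f₁ ω - f₂ ω) - v‖ ^ 2 ∂μ
      ≤ ∫ ω, (2 * ‖f₀ ω - v‖ ^ 2 + 4 * c ^ 2 * (‖f₁ ω - v‖ ^ 2 + ‖f₂ ω - v‖ ^ 2)) ∂μ :=
        integral_mono_of_nonneg (.of_forall fun _ => sq_nonneg _)
          ((h₀.const_mul _).add (h₁₂.const_mul _))
          (.of_forall fun ω => norm_add_smul_sub_sub_sq_le _ _ _ _ c)
    _ = _ := by
      rw [integral_add (h₀.const_mul _) (h₁₂.const_mul _), integral_const_mul,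
        integral_const_mul, integral_add h₁ h₂]

theorem integral_norm_multilevel_sub_sq_le {g G : ℕ → Ω → E} {v : E} {M : ℕ}
    (hg : ∀ j, Integrable (fun ω => ‖g j ω - v‖ ^ 2) μ)
    (hG : ∀ i ω, G i ω =
      g 0 ω + (if 2 ^ i ≤ M then ((2 : ℝ) ^ i) • (g i ω - g (i - 1) ω) else 0)) (i : ℕ) :
    ∫ ω, ‖G i ω - v‖ ^ 2 ∂μ ≤ 2 * ∫ ω, ‖g 0 ω - v‖ ^ 2 ∂μ +
      if 2 ^ i ≤ M then
        4 * 4 ^ i * (∫ ω, ‖g i ω - v‖ ^ 2 ∂μ + ∫ ω, ‖g (i - 1) ω - v‖ ^ 2 ∂μ)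
      else 0 := by
  by_cases hiM : 2 ^ i ≤ M
  · simp only [hG, hiM, if_true]
    convert integral_norm_add_smul_sub_sub_sq_le _ (hg 0) (hg i) (hg (i - 1)) using 3
    rw [← pow_mul, mul_comm i 2, pow_mul]
    norm_num [mul_comm]
  · simp only [hG, hiM, if_false, add_zero]
    have h0 : 0 ≤ ∫ ω, ‖g 0 ω - v‖ ^ 2 ∂μ := integral_nonneg fun _ => sq_nonneg _
    linarith

end Integral

theorem hasSum_of_eq_half_pow {p : ℕ → ℝ} (hp : ∀ i, 1 ≤ i → p i = (1 / 2 : ℝ) ^ i)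
    (hp0 : p 0 = 0) : HasSum p 1 := by
  rw [← hasSum_nat_add_iff' 1, Finset.sum_range_one, hp0, sub_zero]
  have hshift : ∀ n, p (n + 1) = 1 / 2 / 2 ^ n := fun n => by
    rw [hp _ (by omega), one_div_pow, pow_succ]
    ring
  simpa only [hshift] using hasSum_geometric_two' 1

theorem tsum_mul_le_add_sum {ι : Type*} [DecidableEq ι] {p x b : ι → ℝ} {a : ℝ}
    (s : Finset ι) (hp : HasSum p 1) (hp_nonneg : ∀ i, 0 ≤ p i) (hx_nonneg : ∀ i, 0 ≤ x i)
    (hx : ∀ i, p i ≠ 0 → x i ≤ a + if i ∈ s then b i else 0) :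
    ∑' i, p i * x i ≤ a + ∑ i ∈ s, p i * b i := by
  have hpx : ∀ i, p i * x i ≤ p i * (a + if i ∈ s then b i else 0) := fun i => by
    rcases eq_or_ne (p i) 0 with h | h
    · simp [h]
    · exact mul_le_mul_of_nonneg_left (hx i h) (hp_nonneg i)
  have hs : HasSum (fun i => if i ∈ s then p i * b i else 0) (∑ i ∈ s, p i * b i) := by
    simpa using hasSum_sum_of_ne_finset_zero (f := fun i => if i ∈ s then p i * b i else 0)
      (s := s) (by simp_all)
  have hbound : HasSum (fun i => p i * (a + if i ∈ s then b i else 0))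
      (a + ∑ i ∈ s, p i * b i) := by
    simpa [mul_add, mul_ite] using (hp.mul_right a).add hs
  exact hasSum_le hpx
    (Summable.of_nonneg_of_le (fun i => mul_nonneg (hp_nonneg i) (hx_nonneg i)) hpx
      hbound.summable).hasSum hbound

theorem pow_le_iff_mem_Icc_log {b x y : ℕ} (hb : 1 < b) (hx : 1 ≤ x) :
    b ^ x ≤ y ↔ x ∈ Finset.Icc 1 (Nat.log b y) := by
  rw [Finset.mem_Icc, and_iff_right hx]
  refine ⟨Nat.le_log_of_pow_le hb, fun h => Nat.pow_le_of_le_log ?_ h⟩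
  rintro rfl
  rw [Nat.log_zero_right] at h
  omega

theorem antitone_div_two_pow_add_div_four_pow {A C : ℝ} (hA : 0 ≤ A) (hC : 0 ≤ C) :
    Antitone fun n : ℕ => A / 2 ^ n + C / 4 ^ n := fun m n hmn => by
  dsimp only
  gcongr <;> norm_num

theorem multilevel_variance_bound_general (d : ℕ) {Ω : Type*} [MeasurableSpace Ω]
    (μ : Measure Ω)
    (p : ℕ → ℝ) (hp : ∀ i, 1 ≤ i → p i = (1 / 2 : ℝ) ^ i) (hp0 : p 0 = 0)
    (M : ℕ)
    (g : ℕ → Ω → EuclideanSpace ℝ (Fin d))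
    (v : EuclideanSpace ℝ (Fin d)) (A C : ℝ) (hA : 0 ≤ A) (hC : 0 ≤ C)
    (hint2 : ∀ j, Integrable (fun ω => ‖g j ω - v‖ ^ 2) μ)
    (hvar : ∀ j, ∫ ω, ‖g j ω - v‖ ^ 2 ∂μ ≤ A / 2 ^ j + C / 4 ^ j)
    (G : ℕ → Ω → EuclideanSpace ℝ (Fin d))
    (hG : ∀ i ω, G i ω =
      g 0 ω + (if 2 ^ i ≤ M then ((2 : ℝ) ^ i) • (g i ω - g (i - 1) ω) else 0)) :
    ∑' i : ℕ, p i * (∫ ω, ‖G i ω - v‖ ^ 2 ∂μ) ≤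
      2 * ∫ ω, ‖g 0 ω - v‖ ^ 2 ∂μ +
        8 * ∑ i ∈ Finset.Icc 1 (Nat.log 2 M),
          (2 : ℝ) ^ i * (A / 2 ^ (i - 1) + C / 4 ^ (i - 1)) := by
  have hp_nonneg : ∀ i, 0 ≤ p i := by
    rintro (_ | i)
    · exact hp0.ge
    · rw [hp _ (by omega)]
      positivity
  have hlevel : ∀ i, p i ≠ 0 → ∫ ω, ‖G i ω - v‖ ^ 2 ∂μ ≤ 2 * ∫ ω, ‖g 0 ω - v‖ ^ 2 ∂μ +
      if i ∈ Finset.Icc 1 (Nat.log 2 M) then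
        8 * 4 ^ i * (A / 2 ^ (i - 1) + C / 4 ^ (i - 1)) else 0 := by
    intro i hpi
    have hi : 1 ≤ i := Nat.one_le_iff_ne_zero.2 fun h => hpi (h ▸ hp0)
    have hlevel_mono := antitone_div_two_pow_add_div_four_pow hA hC (Nat.sub_le i 1)
    refine (integral_norm_multilevel_sub_sq_le hint2 hG i).trans ?_
    simp only [← pow_le_iff_mem_Icc_log one_lt_two hi]
    split_ifs
    · nlinarith [hvar i, hvar (i - 1), pow_pos (four_pos : (0 : ℝ) < 4) i]
    · rfl
  calc ∑' i, p i * ∫ ω, ‖G i ω - v‖ ^ 2 ∂μ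
      ≤ 2 * ∫ ω, ‖g 0 ω - v‖ ^ 2 ∂μ + ∑ i ∈ Finset.Icc 1 (Nat.log 2 M),
          p i * (8 * 4 ^ i * (A / 2 ^ (i - 1) + C / 4 ^ (i - 1))) :=
        tsum_mul_le_add_sum _ (hasSum_of_eq_half_pow hp hp0) hp_nonneg
          (fun i => integral_nonneg fun _ => sq_nonneg _) hlevel
    _ = _ := by
        rw [Finset.mul_sum]
        congr 1
        refine Finset.sum_congr rfl fun i hi => ?_
        rw [hp i (Finset.mem_Icc.1 hi).1, one_div_pow, show (4 : ℝ) ^ i = 2 ^ i * 2 ^ i by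
          rw [← mul_pow]; norm_num]
        field_simp

/-- Multilevel Monte Carlo second-moment bound: if `E‖g_j - v‖² ≤ A/2ʲ + C/4ʲ` for every
level `j`, then the randomized estimator `g = g₀ + 1{2^J ≤ M} 2^J (g_J - g_{J-1})`,
`J ~ Geom(1/2)`, satisfies
`E‖g - v‖² ≤ 2 E‖g₀ - v‖² + 8 ∑_{i=1}^{⌊log₂ M⌋} 2ⁱ (A/2^{i-1} + C/4^{i-1})`. -/
theorem multilevel_variance_bound (d : ℕ) {Ω : Type*} [MeasurableSpace Ω]
    (μ : Measure Ω) [IsProbabilityMeasure μ]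
    (p : ℕ → ℝ) (hp : ∀ i, 1 ≤ i → p i = (1 / 2 : ℝ) ^ i) (hp0 : p 0 = 0)
    (M : ℕ) (hM : 2 ≤ M)
    (g : ℕ → Ω → EuclideanSpace ℝ (Fin d)) (hint : ∀ j, Integrable (g j) μ)
    (v : EuclideanSpace ℝ (Fin d)) (A C : ℝ) (hA : 0 ≤ A) (hC : 0 ≤ C)
    (hint2 : ∀ j, Integrable (fun ω => ‖g j ω - v‖ ^ 2) μ)
    (hvar : ∀ j, ∫ ω, ‖g j ω - v‖ ^ 2 ∂μ ≤ A / 2 ^ j + C / 4 ^ j)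
    (G : ℕ → Ω → EuclideanSpace ℝ (Fin d))
    (hG : ∀ i ω, G i ω =
      g 0 ω + (if 2 ^ i ≤ M then ((2 : ℝ) ^ i) • (g i ω - g (i - 1) ω) else 0)) :
    ∑' i : ℕ, p i * (∫ ω, ‖G i ω - v‖ ^ 2 ∂μ) ≤
      2 * ∫ ω, ‖g 0 ω - v‖ ^ 2 ∂μ +
        8 * ∑ i ∈ Finset.Icc 1 (Nat.log 2 M),
          (2 : ℝ) ^ i * (A / 2 ^ (i - 1) + C / 4 ^ (i - 1)) :=
  multilevel_variance_bound_general d μ p hp hp0 M g v A C hA hC hint2 hvar G hG
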